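/- If Γ ⊢_smt τ then toSMT(τ) is defined and equals either t sym or t smt for some pre-type t with Γ ⊢_smt t; consequently Γ ⊢_smt toSMT(τ). -/
import Mathlib


/-- Formulog types (pre-types `base`, `tvar`, `adt`; plus `smt`, `sym`, `model`). -/
inductive Ty where
  | base : String → Ty
  | tvar : String → Ty
  | adt : String → List Ty → Ty
  | smt : Ty → Ty
  | sym : Ty → Ty
  | model : Ty

/-- A type is a pre-type when it is a base type, a type variable, or an ADT. -/
def Ty.isPre : Ty → Bool
  | .base _ => true
  | .tvar _ => true
  | .adt _ _ => true
  | _ => false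

/-- Modes of type well-formedness. -/
inductive Mode where
  | exp : Mode
  | smt : Mode

/-- Context entries: term-variable bindings and type variables. -/
inductive CtxEntry where
  | var : String → Ty → CtxEntry
  | tvar : String → CtxEntry

/-- Contexts grow on the left (list head is the most recent entry). -/
abbrev Ctx := List CtxEntry

/-- Type well-formedness `Γ ⊢_m τ`. -/
inductive WF : Ctx → Mode → Ty → Prop where
  | base {Γ : Ctx} {m : Mode} {B : String} : WF Γ m (.base B)
  | tvar {Γ : Ctx} {α : String} : CtxEntry.tvar α ∈ Γ → WF Γ .exp (.tvar α)
  | adt {Γ : Ctx} {m : Mode} {D : String} {ts : List Ty} :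
      (∀ τ ∈ ts, WF Γ m τ) → WF Γ m (.adt D ts)
  | smt {Γ : Ctx} {m : Mode} {t : Ty} : t.isPre = true → WF Γ .smt t → WF Γ m (.smt t)
  | sym {Γ : Ctx} {m : Mode} {t : Ty} : t.isPre = true → WF Γ .smt t → WF Γ m (.sym t)
  | model {Γ : Ctx} : WF Γ .exp .model

mutual
/-- Erasure of types: `erase(B)=B`, `erase(D τ*) = D (erase τ)*`,
    `erase(t smt) = erase(t)`, `erase(t sym) = erase(t)`; undefined elsewhere. -/
def erase : Ty → Option Ty
  | .base B => some (.base B)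
  | .tvar _ => none
  | .adt D ts => (eraseL ts).map (Ty.adt D)
  | .smt t => if t.isPre then erase t else none
  | .sym t => if t.isPre then erase t else none
  | .model => none
def eraseL : List Ty → Option (List Ty)
  | [] => some []
  | t :: ts =>
    match erase t, eraseL ts with
    | some t', some ts' => some (t' :: ts')
    | _, _ => none
end

/-- SMT conversion of types: `toSMT(t) = erase(t) smt`, `toSMT(t smt) = erase(t) smt`,
    `toSMT(t sym) = erase(t) sym`. -/
def toSMT : Ty → Option Ty
  | .sym t => if t.isPre then (erase t).map Ty.sym else none
  | τ => (erase τ).map Ty.smt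

/-- Context well-formedness `⊢ Γ`. -/
inductive CtxWF : Ctx → Prop where
  | nil : CtxWF []
  | var {Γ : Ctx} {X : String} {τ : Ty} :
      CtxWF Γ → WF Γ .exp τ → CtxWF (CtxEntry.var X τ :: Γ)
  | tvar {Γ : Ctx} {α : String} : CtxWF Γ → CtxWF (CtxEntry.tvar α :: Γ)

def CtxEntry.name : CtxEntry → String
  | .var X _ => X
  | .tvar α => α

/-- Domain of a context. -/
def ctxDom (Γ : Ctx) : List String := Γ.map CtxEntry.name


theorem erase_wf {Γ : Ctx} {m : Mode} {τ : Ty} (h : WF Γ m τ) (hm : m = Mode.smt) :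
    ∃ t : Ty, erase τ = some t ∧ t.isPre = true ∧ WF Γ .smt t := by
  induction h with
  | base => exact ⟨_, rfl, rfl, WF.base⟩
  | tvar hmem => cases hm
  | @adt m D ts hts ih =>
    subst hm
    have : ∃ ts', eraseL ts = some ts' ∧ ∀ τ' ∈ ts', WF Γ .smt τ' := by
      clear hts
      induction ts with
      | nil => exact ⟨[], rfl, by simp⟩
      | cons a as ihs =>
        obtain ⟨ta, ha, _, hwa⟩ := ih a (by simp) rfl
        obtain ⟨tas, has, hwas⟩ := ihs (fun τ hτ => ih τ (by simp [hτ]))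
        refine ⟨ta :: tas, ?_, ?_⟩
        · simp [eraseL, ha, has]
        · intro τ' hτ'
          rcases List.mem_cons.mp hτ' with h | h
          · exact h ▸ hwa
          · exact hwas _ h
    obtain ⟨ts', hts', hwts'⟩ := this
    exact ⟨.adt D ts', by simp [erase, hts'], rfl, WF.adt hwts'⟩
  | smt hpre hw ih =>
    obtain ⟨t', h1, h2, h3⟩ := ih rfl
    exact ⟨t', by simp [erase, hpre, h1], h2, h3⟩
  | sym hpre hw ih =>
    obtain ⟨t', h1, h2, h3⟩ := ih rfl
    exact ⟨t', by simp [erase, hpre, h1], h2, h3⟩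
  | model => cases hm

/-- if Γ ⊢_smt τ then toSMT(τ) is defined and equals t sym or t smt for
    some pre-type t with Γ ⊢_smt t; consequently Γ ⊢_smt toSMT(τ). -/
theorem toSMT_wf (Γ : Ctx) (τ : Ty) (h : WF Γ .smt τ) :
    ∃ t : Ty, WF Γ .smt t ∧
      (toSMT τ = some (.sym t) ∨ toSMT τ = some (.smt t)) ∧
      (∀ τ', toSMT τ = some τ' → WF Γ .smt τ') := by
  cases h with
  | base =>
    rename_i B
    obtain ⟨t, h1, h2, h3⟩ := erase_wf (Γ := Γ) (WF.base (B := B)) rfl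
    exact ⟨t, h3, Or.inr (by simp [toSMT, h1]), fun τ' hτ' => by
      simp [toSMT, h1] at hτ'; exact hτ' ▸ WF.smt h2 h3⟩
  | @adt _ D ts hts =>
    obtain ⟨t, h1, h2, h3⟩ := erase_wf (WF.adt (D := D) hts) rfl
    exact ⟨t, h3, Or.inr (by simp [toSMT, h1]), fun τ' hτ' => by
      simp [toSMT, h1] at hτ'; exact hτ' ▸ WF.smt h2 h3⟩
  | smt hpre hw =>
    obtain ⟨t, h1, h2, h3⟩ := erase_wf hw rfl
    refine ⟨t, h3, Or.inr ?_, fun τ' hτ' => ?_⟩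
    · simp [toSMT, erase, hpre, h1]
    · simp [toSMT, erase, hpre, h1] at hτ'; exact hτ' ▸ WF.smt h2 h3
  | sym hpre hw =>
    obtain ⟨t, h1, h2, h3⟩ := erase_wf hw rfl
    refine ⟨t, h3, Or.inl ?_, fun τ' hτ' => ?_⟩
    · simp [toSMT, hpre, h1]
    · simp [toSMT, hpre, h1] at hτ'; exact hτ' ▸ WF.sym h2 h3
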